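/- arXiv:1704.06149 — 4 statements merged into one kernel-verified Lean document; each statement's English description precedes it below -/
import Mathlib

section
/- Let A be an array of length n and [i,j] a subrange of length m = j-i+1. If an element y is a τ-majority of A[i..j] (i.e., occurs at least τ·m times in A[i..j]), and [i,j] is contained in a range D of length 4·2^k while m ≥ 2^k, then y occurs at least (τ/4)·|D| times in D. -/
/-- If `y` is a `τ`-majority of `A[i..j]` with `m = j-i+1 ≥ 2^k`, and `[i,j]`
is contained in a range `D = [a, a+4·2^k-1]` of length `4·2^k`, then `y` occurs
at least `(τ/4)·|D|` times in `D`. -/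
theorem stmt_1 {α : Type*} [DecidableEq α] (A : ℕ → α) (y : α) (τ : ℝ)
    (i j a k : ℕ) (hτ : 0 < τ) (hij : i ≤ j)
    (hsub : Set.Icc i j ⊆ Set.Icc a (a + 4 * 2 ^ k - 1))
    (hm : 2 ^ k ≤ j - i + 1)
    (hmaj : τ * ((j - i + 1 : ℕ) : ℝ) ≤
      (((Finset.Icc i j).filter (fun p => A p = y)).card : ℝ)) :
    (τ / 4) * ((4 * 2 ^ k : ℕ) : ℝ) ≤
      (((Finset.Icc a (a + 4 * 2 ^ k - 1)).filter (fun p => A p = y)).card : ℝ) := by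
  have hsub' : Finset.Icc i j ⊆ Finset.Icc a (a + 4 * 2 ^ k - 1) := by
    intro x hx
    simp only [Finset.mem_Icc] at hx ⊢
    have := hsub (Set.mem_Icc.mpr hx)
    exact Set.mem_Icc.mp this
  have hcard : ((Finset.Icc i j).filter (fun p => A p = y)).card ≤
      ((Finset.Icc a (a + 4 * 2 ^ k - 1)).filter (fun p => A p = y)).card :=
    Finset.card_le_card (Finset.filter_subset_filter _ hsub')
  have h1 : (τ / 4) * ((4 * 2 ^ k : ℕ) : ℝ) ≤ τ * ((j - i + 1 : ℕ) : ℝ) := by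
    have : ((4 * 2 ^ k : ℕ) : ℝ) = 4 * ((2 ^ k : ℕ) : ℝ) := by push_cast; ring
    rw [this]
    have h2 : ((2 ^ k : ℕ) : ℝ) ≤ ((j - i + 1 : ℕ) : ℝ) := by exact_mod_cast hm
    nlinarith
  calc (τ / 4) * ((4 * 2 ^ k : ℕ) : ℝ) ≤ τ * ((j - i + 1 : ℕ) : ℝ) := h1
    _ ≤ (((Finset.Icc i j).filter (fun p => A p = y)).card : ℝ) := hmaj
    _ ≤ _ := by exact_mod_cast hcard
end

section
/- For any quadruple D of length 4·2^k, the number of distinct elements that can be a τ-majority of some query range [i,j] contained in D with length at least 2^k is at most 4/τ. -/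
open scoped Classical

/-- For a quadruple `D = [a, a+4·2^k-1]` of length `4·2^k`, the number of
distinct elements that are a `τ`-majority of some subrange `[i,j] ⊆ D` of
length at least `2^k` is at most `4/τ`. -/
theorem stmt_2 {α : Type*} [DecidableEq α] (A : ℕ → α) (τ : ℝ) (a k : ℕ)
    (hτ : 0 < τ) :
    (((((Finset.Icc a (a + 4 * 2 ^ k - 1)).image A).filter (fun y =>
        ∃ i j : ℕ, a ≤ i ∧ i ≤ j ∧ j ≤ a + 4 * 2 ^ k - 1 ∧
          2 ^ k ≤ j - i + 1 ∧
          τ * ((j - i + 1 : ℕ) : ℝ) ≤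
            (((Finset.Icc i j).filter (fun p => A p = y)).card : ℝ))).card : ℝ))
      ≤ 4 / τ := by
  set b := a + 4 * 2 ^ k - 1 with hb
  set S := (((Finset.Icc a b).image A).filter (fun y =>
        ∃ i j : ℕ, a ≤ i ∧ i ≤ j ∧ j ≤ b ∧
          2 ^ k ≤ j - i + 1 ∧
          τ * ((j - i + 1 : ℕ) : ℝ) ≤
            (((Finset.Icc i j).filter (fun p => A p = y)).card : ℝ))) with hS
  have h2k : (1:ℕ) ≤ 2 ^ k := Nat.one_le_two_pow
  have hTcard : (Finset.Icc a b).card = 4 * 2 ^ k := by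
    rw [Nat.card_Icc, hb]; omega
  have key : ∀ y ∈ S, τ * ((2:ℝ) ^ k) ≤
      (((Finset.Icc a b).filter (fun p => A p = y)).card : ℝ) := by
    intro y hy
    rw [hS, Finset.mem_filter] at hy
    obtain ⟨-, i, j, hai, hij, hjb, hlen, hmaj⟩ := hy
    calc τ * ((2:ℝ) ^ k) ≤ τ * ((j - i + 1 : ℕ) : ℝ) := by
          apply mul_le_mul_of_nonneg_left _ hτ.le
          exact_mod_cast hlen
      _ ≤ (((Finset.Icc i j).filter (fun p => A p = y)).card : ℝ) := hmaj
      _ ≤ _ := by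
          exact_mod_cast Finset.card_le_card
            (Finset.filter_subset_filter _ (Finset.Icc_subset_Icc hai hjb))
  have hdisj : ∀ y ∈ S, ∀ z ∈ S, y ≠ z →
      Disjoint ((Finset.Icc a b).filter (fun p => A p = y))
        ((Finset.Icc a b).filter (fun p => A p = z)) := by
    intro y _ z _ hyz
    simp only [Finset.disjoint_left, Finset.mem_filter]
    rintro p ⟨_, rfl⟩ ⟨_, h⟩
    exact hyz h
  have hsum : ∑ y ∈ S, ((Finset.Icc a b).filter (fun p => A p = y)).card
      ≤ (Finset.Icc a b).card := by
    rw [← Finset.card_biUnion hdisj]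
    exact Finset.card_le_card (Finset.biUnion_subset.mpr fun y _ =>
      Finset.filter_subset _ _)
  have h1 : (S.card : ℝ) * (τ * 2 ^ k) ≤ 4 * 2 ^ k := by
    calc (S.card : ℝ) * (τ * 2 ^ k) = ∑ _y ∈ S, τ * 2 ^ k := by
          rw [Finset.sum_const, nsmul_eq_mul]
      _ ≤ ∑ y ∈ S, (((Finset.Icc a b).filter (fun p => A p = y)).card : ℝ) :=
          Finset.sum_le_sum key
      _ = ((∑ y ∈ S, ((Finset.Icc a b).filter (fun p => A p = y)).card : ℕ) : ℝ) := by
          push_cast; ring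
      _ ≤ ((Finset.Icc a b).card : ℝ) := by exact_mod_cast hsum
      _ = 4 * 2 ^ k := by rw [hTcard]; push_cast; ring
  rw [le_div_iff₀ hτ]
  have h2kR : (0:ℝ) < 2 ^ k := by positivity
  nlinarith [h1]
end

section
/- The query procedure in the lower bound construction correctly recovers, for each i ∈ [1,k] and j ∈ [1,m], the position of symbol α_i within permutation π_j: querying the ranges [ℓ_{i,1},r_{j,1}], [ℓ_{i,2},r_{j,2}], ..., [ℓ_{i,k},r_{j,k}] in order, the first range whose answer is YES (contains a (1/k)-majority) is [ℓ_{i,x},r_{j,x}] where x is the position of α_i in π_j. -/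
/-- Symbols: `Sum.inl a` is the symbol `α_a`; `Sum.inr (i, d)` is a dummy. -/
abbrev GSym := ℕ ⊕ ℕ × ℕ

/-- `k' = k² - k + 2`. -/
def kp (k : ℕ) : ℕ := k ^ 2 - k + 2

/-- The gadget `G(k,i) = α_1^{k'}·…·α_{i-1}^{k'}·α_{i+1}^{k'}·…·α_k^{k'}·
(α_i·β^{k-2})^{k-1}·α_i·β^k`. -/
def gadget (k i : ℕ) : List GSym :=
  ((((List.range k).map (· + 1)).filter (· ≠ i)).flatMap
      (fun a => List.replicate (kp k) (Sum.inl a)))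
    ++ ((List.range (k - 1)).flatMap (fun t =>
          Sum.inl i :: (List.range (k - 2)).map (fun d => Sum.inr (i, t * (k - 2) + d))))
    ++ [Sum.inl i]
    ++ (List.range k).map (fun d => Sum.inr (i, (k - 1) * (k - 2) + d))

/-- The padding `L = G(k,k)·G(k,k-1)·…·G(k,1)`. -/
def pad (k : ℕ) : List GSym :=
  ((List.range k).reverse).flatMap (fun t => gadget k (t + 1))

/-- The bad array `A = L·π_1·…·π_m`, where `p j` lists (the indices of) the
symbols of the permutation `π_j` from left to right (`j` is 0-indexed). -/
def badArr (k m : ℕ) (p : ℕ → ℕ → ℕ) : List GSym :=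
  pad k ++ (List.range m).flatMap (fun j => (List.range k).map (fun t => Sum.inl (p j t)))

/-- `ℓ_{i,x}`: the (0-indexed) position in `A` of the `x`-th-from-the-right
occurrence of `α_i` inside `G(k,i)` (`x ∈ [1,k]`). -/
def lpos (k i x : ℕ) : ℕ :=
  (k - i) * (k * kp k) + (k - 1) * kp k + (k - x) * (k - 1)

/-- `r_{j,x}`: the (0-indexed) position in `A` of the `x`-th symbol of `π_j`
(`j` 0-indexed, `x ∈ [1,k]`). -/
def rpos (k j x : ℕ) : ℕ :=
  k * (k * kp k) + j * k + (x - 1)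

/-- The `(1/k)`-majority decision query on the range `[a,b]` (0-indexed,
inclusive) of the list `A`: is there a symbol of density at least `1/k`? -/
def mquery (A : List GSym) (a b k : ℕ) : Prop :=
  ∃ y : GSym, b - a + 1 ≤ k * ((A.drop a).take (b - a + 1)).count y

/-
The `x`-th query range `A[ℓ_{i,x}..r_{j,x}]` consists of the last `x` occurrences of `α_i` in
`G(k,i)` with the dummies behind them, the gadgets `G(k,i-1),…,G(k,1)`, the permutations
`π_0,…,π_{j-1}` and the first `x` symbols of `π_j`. With `T = (i-1)k' + j + x` its length is
`kT + 2`; every dummy occurs in it at most once and every letter `α_a ≠ α_i` at most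
`(i-1)k' + j + 1 ≤ T` times (the gadgets hold at most `k'` copies of each letter, a permutation
one), while `α_i` occurs `T` times plus once more exactly when it is among the first `x` symbols
of `π_j`. So the range has a `(1/k)`-majority iff `α_i` occurs `T + 1` times, iff `x > x₀`.
-/

-- Core derives `BEq` for `Sum` without a `LawfulBEq` instance.
instance {α β : Type*} [BEq α] [ReflBEq α] [BEq β] [ReflBEq β] : ReflBEq (α ⊕ β) where
  rfl {a} := by
    cases a with
    | inl a | inr a => exact (BEq.rfl : a == a)

instance {α β : Type*} [BEq α] [LawfulBEq α] [BEq β] [LawfulBEq β] : LawfulBEq (α ⊕ β) where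
  eq_of_beq {a b} h := by
    cases a <;> cases b
    · exact congrArg Sum.inl (eq_of_beq h)
    · exact Bool.noConfusion h
    · exact Bool.noConfusion h
    · exact congrArg Sum.inr (eq_of_beq h)

namespace List

variable {α β : Type*}

theorem sum_map_eq_length_mul {l : List α} {f : α → ℕ} {c : ℕ} (h : ∀ a ∈ l, f a = c) :
    (l.map f).sum = l.length * c := by
  rw [map_congr_left h, map_const', sum_replicate, smul_eq_mul]

theorem length_flatMap_of_forall_eq {l : List α} {f : α → List β} {c : ℕ}
    (h : ∀ a ∈ l, (f a).length = c) : (l.flatMap f).length = l.length * c := by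
  rw [length_flatMap, sum_map_eq_length_mul h]

variable [BEq β]

theorem count_flatMap_of_forall_eq {l : List α} {f : α → List β} {b : β} {c : ℕ}
    (h : ∀ a ∈ l, (f a).count b = c) : (l.flatMap f).count b = l.length * c :=
  count_flatMap.trans (sum_map_eq_length_mul h)

theorem count_flatMap_le_of_forall_le {l : List α} {f : α → List β} {b : β} {c : ℕ}
    (h : ∀ a ∈ l, (f a).count b ≤ c) : (l.flatMap f).count b ≤ l.length * c := by
  rw [count_flatMap, ← smul_eq_mul, ← length_map (f := count b ∘ f)]
  exact sum_le_card_nsmul _ _ (by simpa using h)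

variable [LawfulBEq β]

theorem count_flatMap_le_one {l : List α} {f : α → List β} {b : β} (hl : l.Nodup)
    (hf : ∀ a ∈ l, (f a).count b ≤ 1)
    (huniq : ∀ a ∈ l, ∀ a' ∈ l, b ∈ f a → b ∈ f a' → a = a') :
    (l.flatMap f).count b ≤ 1 := by
  induction l with
  | nil => simp
  | cons a l ih =>
    obtain ⟨hal, hl⟩ := nodup_cons.mp hl
    rw [flatMap_cons, count_append]
    by_cases hb : b ∈ f a
    · have : b ∉ l.flatMap f := fun hmem => by
        obtain ⟨a', ha', hba'⟩ := mem_flatMap.mp hmem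
        exact hal (huniq a (mem_cons_self) a' (mem_cons_of_mem _ ha') hb hba' ▸ ha')
      rw [count_eq_zero_of_not_mem this]
      exact hf a mem_cons_self
    · rw [count_eq_zero_of_not_mem hb, zero_add]
      exact ih hl (fun a ha => hf a (mem_cons_of_mem _ ha))
        (fun a ha a' ha' => huniq a (mem_cons_of_mem _ ha) a' (mem_cons_of_mem _ ha'))

theorem count_flatMap_replicate (n : ℕ) (b : β) (l : List β) :
    (l.flatMap (replicate n)).count b = n * l.count b := by
  induction l with
  | nil => simp
  | cons a l ih =>
    rw [flatMap_cons, count_append, ih, count_replicate, count_cons]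
    split <;> ring

end List

namespace MajorityLowerBound

open List

theorem exists_length_le_mul_count_iff {α : Type*} [BEq α] {S : List α} {k T : ℕ} {y₀ : α}
    (hk : 2 ≤ k) (hlen : S.length = k * T + 2) (hle : ∀ y, y ≠ y₀ → S.count y ≤ T)
    (hy₀ : S.count y₀ ≤ T + 1) :
    (∃ y, S.length ≤ k * S.count y) ↔ S.count y₀ = T + 1 := by
  have hlt : ∀ y, S.count y ≤ T → ¬ S.length ≤ k * S.count y := fun y hy h => by
    have := Nat.mul_le_mul_left k hy
    omega
  constructor
  · rintro ⟨y, hy⟩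
    by_cases hyy₀ : y = y₀
    · subst hyy₀
      by_contra hne
      exact hlt y (by omega) hy
    · exact absurd hy (hlt y (hle y hyy₀))
  · intro h
    refine ⟨y₀, ?_⟩
    rw [h, hlen, mul_add_one]
    exact Nat.add_le_add_left hk _

theorem mquery_iff_of_eq_append {A P S R : List GSym} {a b k : ℕ} (hA : A = P ++ S ++ R)
    (ha : P.length = a) (hb : a + S.length = b + 1) (hS : S ≠ []) :
    mquery A a b k ↔ ∃ y, S.length ≤ k * S.count y := by
  have hlen : b - a + 1 = S.length := by
    have := length_pos_iff.mpr hS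
    omega
  rw [mquery, hlen, hA, ← ha, append_assoc, drop_left, take_left]

theorem kp_eq_sub_one_mul_sub_one_add {k : ℕ} (hk : 1 ≤ k) :
    kp k = (k - 1) * (k - 1) + 1 + k := by
  obtain ⟨n, rfl⟩ : ∃ n, k = n + 1 := ⟨k - 1, by omega⟩
  have : (n + 1) ^ 2 = n * n + n + (n + 1) := by ring
  simp only [kp, Nat.add_sub_cancel]
  omega

theorem k_le_kp (k : ℕ) : k ≤ kp k := by
  rcases Nat.eq_zero_or_pos k with rfl | hk
  · simp [kp]
  · rw [kp_eq_sub_one_mul_sub_one_add hk]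
    omega

def gadgetLetters (k i : ℕ) : List ℕ := ((List.range k).map (· + 1)).filter (· ≠ i)

def gadgetHead (k i : ℕ) : List GSym :=
  (gadgetLetters k i).flatMap (fun a => List.replicate (kp k) (Sum.inl a))

def gadgetBlock (k i t : ℕ) : List GSym :=
  Sum.inl i :: (List.range (k - 2)).map (fun d => Sum.inr (i, t * (k - 2) + d))

def gadgetTail (k i : ℕ) : List GSym :=
  (List.range k).map (fun d => Sum.inr (i, (k - 1) * (k - 2) + d))

/-- The part of `G(k,i)` from position `ℓ_{i,x}` on. -/
def gadgetSuffix (k i x : ℕ) : List GSym :=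
  (List.range' (k - x) (x - 1)).flatMap (gadgetBlock k i) ++ Sum.inl i :: gadgetTail k i

theorem gadget_eq_gadgetHead_append_gadgetSuffix (k i : ℕ) :
    gadget k i = gadgetHead k i ++ gadgetSuffix k i k := by
  rw [gadgetSuffix, Nat.sub_self, ← range_eq_range']
  simp only [gadget, append_assoc, singleton_append]
  rfl

theorem mem_gadgetLetters {k i a : ℕ} : a ∈ gadgetLetters k i ↔ 1 ≤ a ∧ a ≤ k ∧ a ≠ i := by
  simp only [gadgetLetters, mem_filter, mem_map, mem_range, decide_eq_true_eq]
  constructor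
  · rintro ⟨⟨c, hc, rfl⟩, h⟩
    exact ⟨by omega, by omega, h⟩
  · rintro ⟨h1, h2, h3⟩
    exact ⟨⟨a - 1, by omega, by omega⟩, h3⟩

theorem nodup_gadgetLetters (k i : ℕ) : (gadgetLetters k i).Nodup :=
  ((nodup_range).map (fun _ _ h => Nat.succ_injective h)).filter _

theorem length_gadgetLetters {k i : ℕ} (hi1 : 1 ≤ i) (hik : i ≤ k) :
    (gadgetLetters k i).length = k - 1 := by
  have hnd : ((List.range k).map (· + 1)).Nodup :=
    (nodup_range).map (fun _ _ h => Nat.succ_injective h)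
  have hmem : i ∈ (List.range k).map (· + 1) :=
    mem_map.mpr ⟨i - 1, mem_range.mpr (by omega), by omega⟩
  have herase : gadgetLetters k i = ((List.range k).map (· + 1)).erase i := by
    rw [hnd.erase_eq_filter]
    exact filter_congr fun _ _ => by grind
  rw [herase, length_erase_of_mem hmem, length_map, length_range]

theorem length_gadgetHead {k i : ℕ} (hi1 : 1 ≤ i) (hik : i ≤ k) :
    (gadgetHead k i).length = (k - 1) * kp k := by
  rw [gadgetHead, length_flatMap_of_forall_eq (fun _ _ => length_replicate),
    length_gadgetLetters hi1 hik]

theorem count_gadgetHead_inl (k i a : ℕ) :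
    (gadgetHead k i).count (Sum.inl a) = if a ∈ gadgetLetters k i then kp k else 0 := by
  rw [gadgetHead, ← flatMap_map (f := Sum.inl) (g := replicate (kp k)),
    count_flatMap_replicate, count_map_of_injective _ _ Sum.inl_injective]
  split_ifs with h
  · rw [count_eq_one_of_mem (nodup_gadgetLetters k i) h, mul_one]
  · rw [count_eq_zero_of_not_mem h, mul_zero]

theorem inr_not_mem_gadgetHead (k i : ℕ) (z : ℕ × ℕ) : Sum.inr z ∉ gadgetHead k i := by
  simp [gadgetHead]

theorem length_gadgetBlock {k : ℕ} (hk : 2 ≤ k) (i t : ℕ) :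
    (gadgetBlock k i t).length = k - 1 := by
  simp only [gadgetBlock, length_cons, length_map, length_range]
  omega

theorem count_gadgetBlock_inl (k i t a : ℕ) :
    (gadgetBlock k i t).count (Sum.inl a) = if a = i then 1 else 0 := by
  simp only [gadgetBlock, count_cons, beq_iff_eq, Sum.inl.injEq]
  rw [count_eq_zero_of_not_mem (by simp)]
  simp [eq_comm]

theorem count_gadgetBlock_inr_le_one (k i t : ℕ) (z : ℕ × ℕ) :
    (gadgetBlock k i t).count (Sum.inr z) ≤ 1 := by
  refine nodup_iff_count_le_one.mp ?_ _
  refine nodup_cons.mpr ⟨by simp, (nodup_range).map fun _ _ h => ?_⟩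
  simpa using h

theorem mem_gadgetBlock_inr {k i t c d : ℕ} (h : Sum.inr (c, d) ∈ gadgetBlock k i t) :
    c = i ∧ t * (k - 2) ≤ d ∧ d < (t + 1) * (k - 2) := by
  simp only [gadgetBlock, mem_cons, reduceCtorEq, false_or, mem_map, mem_range, Sum.inr.injEq,
    Prod.mk.injEq] at h
  obtain ⟨e, he, rfl, rfl⟩ := h
  exact ⟨rfl, by omega, by rw [add_one_mul]; omega⟩

theorem count_gadgetTail_inl (k i a : ℕ) : (gadgetTail k i).count (Sum.inl a) = 0 :=
  count_eq_zero_of_not_mem (by simp [gadgetTail])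

theorem count_gadgetTail_inr_le_one (k i : ℕ) (z : ℕ × ℕ) :
    (gadgetTail k i).count (Sum.inr z) ≤ 1 :=
  nodup_iff_count_le_one.mp ((nodup_range).map fun _ _ h => by simpa using h) _

theorem mem_gadgetTail_inr {k i c d : ℕ} (h : Sum.inr (c, d) ∈ gadgetTail k i) :
    c = i ∧ (k - 1) * (k - 2) ≤ d := by
  simp only [gadgetTail, mem_map, mem_range, Sum.inr.injEq, Prod.mk.injEq] at h
  obtain ⟨e, -, rfl, rfl⟩ := h
  exact ⟨rfl, by omega⟩

theorem gadget_eq_append_gadgetSuffix {k i x : ℕ} (hk : 2 ≤ k) (hi1 : 1 ≤ i) (hik : i ≤ k)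
    (hx1 : 1 ≤ x) (hxk : x ≤ k) :
    ∃ P, P.length = (k - 1) * kp k + (k - x) * (k - 1) ∧
      gadget k i = P ++ gadgetSuffix k i x := by
  refine ⟨gadgetHead k i ++ (range' 0 (k - x)).flatMap (gadgetBlock k i), ?_, ?_⟩
  · rw [length_append, length_gadgetHead hi1 hik,
      length_flatMap_of_forall_eq (fun t _ => length_gadgetBlock hk i t), length_range']
  · have hsplit : range' 0 (k - 1) = range' 0 (k - x) ++ range' (k - x) (x - 1) := by
      have h := range'_append (s := 0) (m := k - x) (n := x - 1) (step := 1)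
      rwa [Nat.zero_add, Nat.one_mul, show k - x + (x - 1) = k - 1 by omega, eq_comm] at h
    rw [gadget_eq_gadgetHead_append_gadgetSuffix]
    simp only [gadgetSuffix, Nat.sub_self, hsplit, flatMap_append, append_assoc]

theorem length_gadgetSuffix {k : ℕ} (hk : 2 ≤ k) (i : ℕ) {x : ℕ} :
    (gadgetSuffix k i x).length = (x - 1) * (k - 1) + (k + 1) := by
  rw [gadgetSuffix, length_append,
    length_flatMap_of_forall_eq (fun t _ => length_gadgetBlock hk i t), length_range', length_cons,
    gadgetTail, length_map, length_range]

theorem count_gadgetSuffix_inl (k i a : ℕ) {x : ℕ} (hx1 : 1 ≤ x) :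
    (gadgetSuffix k i x).count (Sum.inl a) = if a = i then x else 0 := by
  rw [gadgetSuffix, count_append,
    count_flatMap_of_forall_eq (fun t _ => count_gadgetBlock_inl k i t a), count_cons,
    count_gadgetTail_inl, length_range']
  by_cases h : a = i
  · simp only [h, if_true, beq_self_eq_true]
    omega
  · simp [h, Ne.symm h]

theorem length_gadget {k : ℕ} (hk : 2 ≤ k) {i : ℕ} (hi1 : 1 ≤ i) (hik : i ≤ k) :
    (gadget k i).length = k * kp k := by
  rw [gadget_eq_gadgetHead_append_gadgetSuffix, length_append, length_gadgetHead hi1 hik,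
    length_gadgetSuffix hk, kp_eq_sub_one_mul_sub_one_add (by omega : 1 ≤ k)]
  obtain ⟨n, rfl⟩ : ∃ n, k = n + 1 := ⟨k - 1, by omega⟩
  simp only [Nat.add_sub_cancel]
  ring

theorem count_gadget_inl {k : ℕ} (hk : 1 ≤ k) (i a : ℕ) :
    (gadget k i).count (Sum.inl a)
      = (if a ∈ gadgetLetters k i then kp k else 0) + if a = i then k else 0 := by
  rw [gadget_eq_gadgetHead_append_gadgetSuffix, count_append, count_gadgetHead_inl,
    count_gadgetSuffix_inl _ _ _ hk]

theorem count_gadget_inl_le {k : ℕ} (hk : 1 ≤ k) (i a : ℕ) :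
    (gadget k i).count (Sum.inl a) ≤ kp k := by
  rw [count_gadget_inl hk]
  have := k_le_kp k
  split_ifs with hmem hai
  · exact absurd hai (mem_gadgetLetters.mp hmem).2.2
  all_goals omega

theorem count_gadget_inl_of_ne {k : ℕ} (hk : 1 ≤ k) {i a : ℕ} (ha1 : 1 ≤ a) (hak : a ≤ k)
    (hai : a ≠ i) : (gadget k i).count (Sum.inl a) = kp k := by
  rw [count_gadget_inl hk, if_pos (mem_gadgetLetters.mpr ⟨ha1, hak, hai⟩), if_neg hai, add_zero]

theorem gadget_eq_gadgetHead_append_gadgetBlocks (k i : ℕ) :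
    gadget k i = gadgetHead k i ++
      ((range' 0 (k - 1)).flatMap (gadgetBlock k i) ++ Sum.inl i :: gadgetTail k i) := by
  rw [gadget_eq_gadgetHead_append_gadgetSuffix, gadgetSuffix, Nat.sub_self]

theorem fst_eq_of_inr_mem_gadget {k i : ℕ} {z : ℕ × ℕ} (h : Sum.inr z ∈ gadget k i) :
    z.1 = i := by
  obtain ⟨c, d⟩ := z
  simp only [gadget_eq_gadgetHead_append_gadgetBlocks, mem_append, mem_flatMap, mem_cons,
    reduceCtorEq, false_or] at h
  rcases h with h | ⟨t, -, h⟩ | h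
  · exact absurd h (inr_not_mem_gadgetHead k i _)
  · exact (mem_gadgetBlock_inr h).1
  · exact (mem_gadgetTail_inr h).1

theorem count_gadget_inr_le_one (k i : ℕ) (z : ℕ × ℕ) : (gadget k i).count (Sum.inr z) ≤ 1 := by
  obtain ⟨c, d⟩ := z
  -- the dummy `(c, d)` can only lie in block number `d / (k - 2)`, or in the tail
  have hblock_index : ∀ t, Sum.inr (c, d) ∈ gadgetBlock k i t → d / (k - 2) = t := fun t h =>
    Nat.div_eq_of_lt_le (mem_gadgetBlock_inr h).2.1 (mem_gadgetBlock_inr h).2.2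
  have hblocks : ((range' 0 (k - 1)).flatMap (gadgetBlock k i)).count (Sum.inr (c, d)) ≤ 1 :=
    count_flatMap_le_one nodup_range' (fun t _ => count_gadgetBlock_inr_le_one k i t _)
      fun t _ t' _ h h' => (hblock_index t h).symm.trans (hblock_index t' h')
  rw [gadget_eq_gadgetHead_append_gadgetBlocks, count_append,
    count_eq_zero_of_not_mem (inr_not_mem_gadgetHead k i _), zero_add, count_append, count_cons,
    if_neg (by simp), add_zero]
  by_cases htail : Sum.inr (c, d) ∈ gadgetTail k i
  · have hd := (mem_gadgetTail_inr htail).2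
    have : Sum.inr (c, d) ∉ (range' 0 (k - 1)).flatMap (gadgetBlock k i) := by
      simp only [mem_flatMap, mem_range'_1, not_exists, not_and]
      intro t ht hmem
      have hlt := (mem_gadgetBlock_inr hmem).2.2
      have : (t + 1) * (k - 2) ≤ (k - 1) * (k - 2) := Nat.mul_le_mul_right _ (by omega)
      omega
    rw [count_eq_zero_of_not_mem this, zero_add]
    exact count_gadgetTail_inr_le_one k i _
  · rw [count_eq_zero_of_not_mem htail, add_zero]
    exact hblocks

def gadgets (k n : ℕ) : List GSym := (range n).reverse.flatMap (fun t => gadget k (t + 1))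

theorem gadgets_succ (k n : ℕ) : gadgets k (n + 1) = gadget k (n + 1) ++ gadgets k n := by
  simp [gadgets, range_succ]

theorem gadgets_eq_append {k n N : ℕ} (hk : 2 ≤ k) (hnN : n ≤ N) (hN : N ≤ k) :
    ∃ U, U.length = (N - n) * (k * kp k) ∧ gadgets k N = U ++ gadgets k n := by
  induction N, hnN using Nat.le_induction with
  | base => exact ⟨[], by simp, rfl⟩
  | succ N hnN ih =>
    obtain ⟨U, hU, hgadgets⟩ := ih (by omega)
    refine ⟨gadget k (N + 1) ++ U, ?_, by rw [gadgets_succ, hgadgets, append_assoc]⟩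
    rw [length_append, hU, length_gadget hk (by omega) hN, show N + 1 - n = N - n + 1 by omega]
    ring

theorem length_gadgets {k n : ℕ} (hk : 2 ≤ k) (hn : n ≤ k) :
    (gadgets k n).length = n * (k * kp k) := by
  rw [gadgets, length_flatMap_of_forall_eq (c := k * kp k), length_reverse, length_range]
  intro t ht
  rw [mem_reverse, mem_range] at ht
  exact length_gadget hk (by omega) (by omega)

theorem count_gadgets_inl_le {k : ℕ} (hk : 1 ≤ k) (n a : ℕ) :
    (gadgets k n).count (Sum.inl a) ≤ n * kp k := by
  simpa [gadgets] using count_flatMap_le_of_forall_le (l := (range n).reverse)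
    (fun t _ => count_gadget_inl_le hk (t + 1) a)

theorem count_gadgets_inl_of_lt {k n a : ℕ} (hk : 1 ≤ k) (hna : n < a) (hak : a ≤ k) :
    (gadgets k n).count (Sum.inl a) = n * kp k := by
  rw [gadgets, count_flatMap_of_forall_eq (c := kp k), length_reverse, length_range]
  intro t ht
  rw [mem_reverse, mem_range] at ht
  exact count_gadget_inl_of_ne hk (by omega) hak (by omega)

theorem count_gadgets_inr_le_one (k n : ℕ) (z : ℕ × ℕ) : (gadgets k n).count (Sum.inr z) ≤ 1 :=
  count_flatMap_le_one (nodup_reverse.mpr nodup_range)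
    (fun t _ => count_gadget_inr_le_one k (t + 1) z)
    fun _ _ _ _ h h' => by
      have := fst_eq_of_inr_mem_gadget h
      have := fst_eq_of_inr_mem_gadget h'
      omega

def permBlock (p : ℕ → ℕ → ℕ) (k j : ℕ) : List GSym := (range k).map (fun t => Sum.inl (p j t))

def permBlocks (p : ℕ → ℕ → ℕ) (k n : ℕ) : List GSym := (range n).flatMap (permBlock p k)

theorem badArr_eq (k m : ℕ) (p : ℕ → ℕ → ℕ) : badArr k m p = gadgets k k ++ permBlocks p k m := rfl

theorem permBlocks_eq_append (p : ℕ → ℕ → ℕ) (k : ℕ) {j m : ℕ} (hj : j < m) :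
    ∃ R, permBlocks p k m = permBlocks p k j ++ permBlock p k j ++ R := by
  obtain ⟨r, rfl⟩ : ∃ r, m = j + 1 + r := ⟨m - (j + 1), by omega⟩
  refine ⟨((range r).map (j + 1 + ·)).flatMap (permBlock p k), ?_⟩
  simp only [permBlocks, range_add, range_succ, flatMap_append, flatMap_singleton]

theorem length_permBlocks (p : ℕ → ℕ → ℕ) (k n : ℕ) : (permBlocks p k n).length = n * k := by
  rw [permBlocks, length_flatMap_of_forall_eq (c := k) (fun _ _ => by simp [permBlock]),
    length_range]

theorem inr_not_mem_permBlocks (p : ℕ → ℕ → ℕ) (k n : ℕ) (z : ℕ × ℕ) :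
    Sum.inr z ∉ permBlocks p k n := by
  simp [permBlocks, permBlock]

section Permutations

variable {k m n : ℕ} {p : ℕ → ℕ → ℕ}

theorem nodup_permBlock (hrange : ∀ j < m, ∀ t < k, 1 ≤ p j t ∧ p j t ≤ k)
    (hperm : ∀ j < m, ∀ a, 1 ≤ a → a ≤ k → ∃! t, t < k ∧ p j t = a) {j : ℕ} (hj : j < m) :
    (permBlock p k j).Nodup := by
  refine nodup_range.map_on fun t ht t' ht' h => ?_
  rw [mem_range] at ht ht'
  obtain ⟨h1, h2⟩ := hrange j hj t ht
  obtain ⟨_, -, huniq⟩ := hperm j hj _ h1 h2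
  exact (huniq t ⟨ht, rfl⟩).trans (huniq t' ⟨ht', (Sum.inl.inj h).symm⟩).symm

theorem inl_mem_permBlock (hperm : ∀ j < m, ∀ a, 1 ≤ a → a ≤ k → ∃! t, t < k ∧ p j t = a)
    {j a : ℕ} (hj : j < m) (ha1 : 1 ≤ a) (hak : a ≤ k) : Sum.inl a ∈ permBlock p k j := by
  obtain ⟨t, ⟨ht, hpt⟩, -⟩ := hperm j hj a ha1 hak
  exact mem_map.mpr ⟨t, mem_range.mpr ht, by rw [hpt]⟩

theorem inl_mem_take_permBlock_iff
    (hperm : ∀ j < m, ∀ a, 1 ≤ a → a ≤ k → ∃! t, t < k ∧ p j t = a)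
    {i j x₀ x : ℕ} (hi1 : 1 ≤ i) (hik : i ≤ k) (hj : j < m) (hx₀ : x₀ < k) (hpos : p j x₀ = i)
    (hxk : x ≤ k) : Sum.inl i ∈ (permBlock p k j).take x ↔ x₀ < x := by
  rw [permBlock, ← map_take, take_range, min_eq_left hxk]
  simp only [mem_map, mem_range, Sum.inl.injEq]
  constructor
  · rintro ⟨t, ht, hpt⟩
    obtain ⟨_, -, huniq⟩ := hperm j hj i hi1 hik
    have := (huniq t ⟨by omega, hpt⟩).trans (huniq x₀ ⟨hx₀, hpos⟩).symm
    omega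
  · exact fun h => ⟨x₀, h, hpos⟩

theorem count_permBlocks_le (hnd : ∀ t < n, (permBlock p k t).Nodup) (y : GSym) :
    (permBlocks p k n).count y ≤ n := by
  simpa [permBlocks] using count_flatMap_le_of_forall_le (l := range n) (c := 1)
    (fun t ht => nodup_iff_count_le_one.mp (hnd t (mem_range.mp ht)) y)

theorem count_permBlocks_of_mem (hnd : ∀ t < n, (permBlock p k t).Nodup) {y : GSym}
    (hmem : ∀ t < n, y ∈ permBlock p k t) : (permBlocks p k n).count y = n := by
  simpa [permBlocks] using count_flatMap_of_forall_eq (l := range n) (c := 1)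
    (fun t ht => count_eq_one_of_mem (hnd t (mem_range.mp ht)) (hmem t (mem_range.mp ht)))

theorem count_take_permBlock_le_one (hrange : ∀ j < m, ∀ t < k, 1 ≤ p j t ∧ p j t ≤ k)
    (hperm : ∀ j < m, ∀ a, 1 ≤ a → a ≤ k → ∃! t, t < k ∧ p j t = a) {j : ℕ} (hj : j < m)
    (x : ℕ) (y : GSym) : ((permBlock p k j).take x).count y ≤ 1 :=
  nodup_iff_count_le_one.mp ((nodup_permBlock hrange hperm hj).sublist (take_sublist x _)) y

end Permutations

/-- The contents `A[ℓ_{i,x}..r_{j,x}]` of the `x`-th query. -/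
def querySlice (k : ℕ) (p : ℕ → ℕ → ℕ) (i j x : ℕ) : List GSym :=
  gadgetSuffix k i x ++ gadgets k (i - 1) ++ permBlocks p k j ++ (permBlock p k j).take x

variable {k m : ℕ} {p : ℕ → ℕ → ℕ} {i j x : ℕ}

theorem badArr_eq_append_querySlice (hk : 2 ≤ k) (hi1 : 1 ≤ i) (hik : i ≤ k) (hj : j < m)
    (hx1 : 1 ≤ x) (hxk : x ≤ k) :
    ∃ P R, P.length = lpos k i x ∧ badArr k m p = P ++ querySlice k p i j x ++ R := by
  obtain ⟨U, hU, hpad⟩ := gadgets_eq_append hk hik le_rfl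
  obtain ⟨P, hP, hgadget⟩ := gadget_eq_append_gadgetSuffix hk hi1 hik hx1 hxk
  obtain ⟨R, hperms⟩ := permBlocks_eq_append p k hj
  have hgadgets : gadgets k i = gadget k i ++ gadgets k (i - 1) := by
    simpa [Nat.sub_add_cancel hi1] using gadgets_succ k (i - 1)
  refine ⟨U ++ P, (permBlock p k j).drop x ++ R, ?_, ?_⟩
  · rw [length_append, hU, hP, lpos, add_assoc]
  · rw [badArr_eq, hpad, hgadgets, hgadget, hperms, querySlice]
    conv_lhs => rw [← take_append_drop x (permBlock p k j)]
    simp only [append_assoc]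

theorem length_querySlice (hk : 2 ≤ k) (hi1 : 1 ≤ i) (hik : i ≤ k) (hx1 : 1 ≤ x) (hxk : x ≤ k) :
    (querySlice k p i j x).length = k * ((i - 1) * kp k + j + x) + 2 := by
  rw [querySlice, length_append, length_append, length_append, length_gadgetSuffix hk,
    length_gadgets hk (by omega), length_permBlocks, length_take, permBlock, length_map,
    length_range, min_eq_left hxk]
  obtain ⟨x, rfl⟩ : ∃ x', x = x' + 1 := ⟨x - 1, by omega⟩
  obtain ⟨k, rfl⟩ : ∃ k', k = k' + 1 := ⟨k - 1, by omega⟩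
  simp only [Nat.add_sub_cancel]
  ring

theorem lpos_add_length_querySlice (hk : 2 ≤ k) (hi1 : 1 ≤ i) (hik : i ≤ k) (hx1 : 1 ≤ x)
    (hxk : x ≤ k) : lpos k i x + (querySlice k p i j x).length = rpos k j x + 1 := by
  rw [length_querySlice hk hi1 hik hx1 hxk, lpos, rpos, kp_eq_sub_one_mul_sub_one_add (by omega)]
  zify [hi1, hik, hx1, hxk, (by omega : 1 ≤ k)]
  ring

theorem count_querySlice_inl_self (hk : 2 ≤ k) (hi1 : 1 ≤ i) (hik : i ≤ k) (hj : j < m)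
    (hx1 : 1 ≤ x) (hrange : ∀ j < m, ∀ t < k, 1 ≤ p j t ∧ p j t ≤ k)
    (hperm : ∀ j < m, ∀ a, 1 ≤ a → a ≤ k → ∃! t, t < k ∧ p j t = a) :
    (querySlice k p i j x).count (Sum.inl i)
      = (i - 1) * kp k + j + x + ((permBlock p k j).take x).count (Sum.inl i) := by
  rw [querySlice, count_append, count_append, count_append, count_gadgetSuffix_inl _ _ _ hx1,
    if_pos rfl, count_gadgets_inl_of_lt (by omega) (by omega) hik,
    count_permBlocks_of_mem (fun t ht => nodup_permBlock hrange hperm (by omega))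
      (fun t ht => inl_mem_permBlock hperm (by omega) hi1 hik)]
  ring

theorem count_querySlice_inl_le_of_ne (hk : 2 ≤ k) (hj : j < m) (hx1 : 1 ≤ x)
    (hrange : ∀ j < m, ∀ t < k, 1 ≤ p j t ∧ p j t ≤ k)
    (hperm : ∀ j < m, ∀ a, 1 ≤ a → a ≤ k → ∃! t, t < k ∧ p j t = a) {a : ℕ} (hai : a ≠ i) :
    (querySlice k p i j x).count (Sum.inl a) ≤ (i - 1) * kp k + j + 1 := by
  have hgadgets := count_gadgets_inl_le (by omega : 1 ≤ k) (i - 1) a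
  have hperms := count_permBlocks_le (n := j)
    (fun t ht => nodup_permBlock hrange hperm (by omega)) (Sum.inl a)
  have htake := count_take_permBlock_le_one hrange hperm hj x (Sum.inl a)
  rw [querySlice, count_append, count_append, count_append, count_gadgetSuffix_inl _ _ _ hx1,
    if_neg hai]
  omega

theorem count_badArr_inr_le_one (k m : ℕ) (p : ℕ → ℕ → ℕ) (z : ℕ × ℕ) :
    (badArr k m p).count (Sum.inr z) ≤ 1 := by
  rw [badArr_eq, count_append, count_eq_zero_of_not_mem (inr_not_mem_permBlocks p k m z),
    add_zero]
  exact count_gadgets_inr_le_one k k z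

theorem mquery_badArr_iff (hk : 2 ≤ k) (hrange : ∀ j < m, ∀ t < k, 1 ≤ p j t ∧ p j t ≤ k)
    (hperm : ∀ j < m, ∀ a, 1 ≤ a → a ≤ k → ∃! t, t < k ∧ p j t = a) {x₀ : ℕ} (hi1 : 1 ≤ i)
    (hik : i ≤ k) (hj : j < m) (hx₀ : x₀ < k) (hpos : p j x₀ = i) (hx1 : 1 ≤ x) (hxk : x ≤ k) :
    mquery (badArr k m p) (lpos k i x) (rpos k j x) k ↔ x₀ < x := by
  obtain ⟨P, R, hP, hA⟩ := badArr_eq_append_querySlice (p := p) hk hi1 hik hj hx1 hxk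
  set S := querySlice k p i j x
  obtain ⟨T, hT⟩ : ∃ T, T = (i - 1) * kp k + j + x := ⟨_, rfl⟩
  have hlen : S.length = k * T + 2 := hT ▸ length_querySlice hk hi1 hik hx1 hxk
  have hself : S.count (Sum.inl i) = T + ((permBlock p k j).take x).count (Sum.inl i) :=
    hT ▸ count_querySlice_inl_self hk hi1 hik hj hx1 hrange hperm
  have htake := count_take_permBlock_le_one hrange hperm hj x (Sum.inl i)
  have hle : ∀ y, y ≠ Sum.inl i → S.count y ≤ T := by
    rintro (a | z) hy
    · have : S.count (Sum.inl a) ≤ (i - 1) * kp k + j + 1 :=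
        count_querySlice_inl_le_of_ne hk hj hx1 hrange hperm fun h => hy (congrArg Sum.inl h)
      omega
    · have : S.count (Sum.inr z) ≤ 1 :=
        ((hA ▸ infix_append P S R : S <:+: badArr k m p).count_le _).trans
          (count_badArr_inr_le_one k m p z)
      omega
  rw [mquery_iff_of_eq_append hA hP (lpos_add_length_querySlice hk hi1 hik hx1 hxk)
      (ne_nil_of_length_pos (by omega)), exists_length_le_mul_count_iff hk hlen hle (by omega),
    hself, ← inl_mem_take_permBlock_iff hperm hi1 hik hj hx₀ hpos hxk, ← count_pos_iff]
  omega

end MajorityLowerBound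

/-- Correctness of the query procedure of the lower bound: for `i ∈ [1,k]` and
`j ∈ [0,m)`, querying `[ℓ_{i,1},r_{j,1}], [ℓ_{i,2},r_{j,2}], …` in order, the
first YES answer occurs exactly at `x = x₀ + 1`, the (1-indexed) position of
`α_i` within `π_j`. -/
theorem stmt_14 (k m : ℕ) (p : ℕ → ℕ → ℕ) (hk : 2 ≤ k)
    (hrange : ∀ j < m, ∀ t < k, 1 ≤ p j t ∧ p j t ≤ k)
    (hperm : ∀ j < m, ∀ a, 1 ≤ a → a ≤ k → ∃! t, t < k ∧ p j t = a)
    (i j x₀ : ℕ) (hi1 : 1 ≤ i) (hik : i ≤ k) (hj : j < m)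
    (hx₀ : x₀ < k) (hpos : p j x₀ = i) :
    (∀ x, 1 ≤ x → x ≤ x₀ → ¬ mquery (badArr k m p) (lpos k i x) (rpos k j x) k) ∧
      mquery (badArr k m p) (lpos k i (x₀ + 1)) (rpos k j (x₀ + 1)) k := by
  have query_iff := fun x (hx1 : 1 ≤ x) (hxk : x ≤ k) =>
    MajorityLowerBound.mquery_badArr_iff hk hrange hperm hi1 hik hj hx₀ hpos hx1 hxk
  exact ⟨fun x hx1 hxx₀ hyes => absurd ((query_iff x hx1 (by omega)).mp hyes) (by omega),
    (query_iff (x₀ + 1) (by omega) (by omega)).mpr (by omega)⟩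
end

section
/- Given sets S_i, S_j ⊆ [X] encoded as in the set-intersection reduction, the constructed query range of length |S_i| + |S_j| + |X|·(2t+2) (with t = n-i+j-1) contains a 1/(2|X|)-majority element if and only if S_i ∩ S_j ≠ ∅. -/
/-- `B_q` (0-indexed `q`): the elements of `[X]` not in `S_q` followed by the
elements in `S_q` (each universe element listed once), tagged as non-dummies. -/
def setBlock (X : ℕ) (S : ℕ → Finset (Fin X)) (q : ℕ) : List (Fin X ⊕ ℕ) :=
  (((List.finRange X).filter (fun x => x ∉ S q))
      ++ ((List.finRange X).filter (fun x => x ∈ S q))).map Sum.inl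

/-- `C`: a block of `X` dummy symbols, each occurring exactly once in the whole
array (`b` is a unique block identifier). -/
def dummyBlock (X b : ℕ) : List (Fin X ⊕ ℕ) :=
  (List.range X).map (fun d => Sum.inr (b * X + d))

/-- The array of the set-intersection reduction:
`A = B_1·C·B_2·C·…·B_n·C·C·B_n^r·C·…·C·B_1^r·C`. -/
def siArr (X n : ℕ) (S : ℕ → Finset (Fin X)) : List (Fin X ⊕ ℕ) :=
  ((List.range n).flatMap (fun q => setBlock X S q ++ dummyBlock X q))
    ++ dummyBlock X n
    ++ ((List.range n).flatMap (fun q =>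
          (setBlock X S (n - 1 - q)).reverse ++ dummyBlock X (n + 1 + q)))

/-
Between the two ends of the query range lie `t` complete units `B_q·C` or `B_q^r·C` and two
further dummy blocks, so every `x ∈ [X]` occurs exactly `t` times there, while the range has
length `|S_i| + |S_j| + 2X(t + 1)`. The two partial blocks at the ends contribute one more
occurrence of `x` for each of `S_i`, `S_j` containing it. As `0 < |S_i| + |S_j| ≤ 2X`, the
threshold is `t + 2` occurrences, reached exactly by the elements of `S_i ∩ S_j`; a dummy symbol
never reaches it, since the dummies of `A`, read from left to right, are `0, 1, …, (2n+1)X - 1`.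
-/

open List

-- Core derives `BEq` for `Sum` but provides no `LawfulBEq` instance for it.
instance instLawfulBEqSum {α β : Type*} [BEq α] [BEq β] [LawfulBEq α] [LawfulBEq β] :
    LawfulBEq (α ⊕ β) where
  eq_of_beq {a b} h := by
    cases a <;> cases b
    · exact congrArg Sum.inl (eq_of_beq h)
    · exact Bool.noConfusion h
    · exact Bool.noConfusion h
    · exact congrArg Sum.inr (eq_of_beq h)
  rfl {a} := by
    cases a with
    | inl v => exact BEq.rfl (a := v)
    | inr v => exact BEq.rfl (a := v)

lemma length_flatMap_of_length_eq {α β : Type*} {l : List α} {f : α → List β} {c : ℕ}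
    (h : ∀ a ∈ l, (f a).length = c) : (l.flatMap f).length = l.length * c := by
  rw [length_flatMap, map_congr_left h, map_const', sum_replicate, smul_eq_mul]

lemma count_flatMap_of_count_eq {α β : Type*} [BEq β] {l : List α} {f : α → List β} {x : β}
    {c : ℕ} (h : ∀ a ∈ l, (f a).count x = c) : (l.flatMap f).count x = l.length * c := by
  rw [count_flatMap, map_congr_left (f := count x ∘ f) h, map_const', sum_replicate, smul_eq_mul]

lemma flatMap_range'_mul (X s k : ℕ) :
    (range' s k).flatMap (fun q => range' (q * X) X) = range' (s * X) (k * X) := by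
  induction k generalizing s with
  | zero => simp
  | succ k ih =>
    rw [range'_succ, flatMap_cons, ih, add_one_mul, add_one_mul, range'_append_1, add_comm]

lemma count_inr_le_one_of_nodup {α β : Type*} [BEq α] [LawfulBEq α] [BEq β] [LawfulBEq β]
    {l : List (α ⊕ β)} (h : (l.filterMap Sum.getRight?).Nodup) (d : β) :
    l.count (Sum.inr d) ≤ 1 := by
  calc l.count (Sum.inr d) = (l.filterMap Sum.getRight?).count d := by
        rw [count_filterMap, count_eq_countP]
        exact countP_congr fun a _ => by cases a <;> simp
    _ ≤ 1 := nodup_iff_count_le_one.1 h d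

lemma range_eq_append_cons {a n : ℕ} (h : a < n) :
    range n = range a ++ a :: range' (a + 1) (n - 1 - a) := by
  obtain ⟨k, rfl⟩ : ∃ k, n = a + 1 + k := ⟨n - 1 - a, by omega⟩
  rw [range_eq_range', range_eq_range', add_assoc, ← range'_append, add_comm 1 k, range'_succ]
  simp

theorem exists_majority_iff_inter_nonempty {X t : ℕ} {β : Type*} [BEq β] [LawfulBEq β]
    (A B : Finset (Fin X)) (l : List (Fin X ⊕ β))
    (hlen : l.length = A.card + B.card + 2 * X * (t + 1))
    (hinl : ∀ x, l.count (Sum.inl x) = t + (if x ∈ A then 1 else 0) + (if x ∈ B then 1 else 0))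
    (hinr : ∀ d, l.count (Sum.inr d) ≤ 1) (hAB : 0 < A.card + B.card) :
    (∃ y, l.length ≤ 2 * X * l.count y) ↔ (A ∩ B).Nonempty := by
  constructor
  · rintro ⟨y, hy⟩
    by_contra hAB'
    have hcount : l.count y ≤ t + 1 := by
      rcases y with x | d
      · have : ¬(x ∈ A ∧ x ∈ B) := fun hx => hAB' ⟨x, Finset.mem_inter.2 hx⟩
        rw [hinl]
        split_ifs with hA hB
        · exact absurd ⟨hA, hB⟩ this
        all_goals omega
      · exact (hinr d).trans (Nat.le_add_left 1 t)
    have := Nat.mul_le_mul_left (2 * X) hcount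
    omega
  · rintro ⟨x, hx⟩
    rw [Finset.mem_inter] at hx
    refine ⟨Sum.inl x, ?_⟩
    rw [hlen, hinl, if_pos hx.1, if_pos hx.2, mul_add (2 * X) (t + 1)]
    have := card_finset_fin_le A
    have := card_finset_fin_le B
    omega

def inlList {X : ℕ} (T : Finset (Fin X)) : List (Fin X ⊕ ℕ) :=
  ((finRange X).filter (· ∈ T)).map Sum.inl

section Blocks

variable {X : ℕ}

lemma length_inlList (T : Finset (Fin X)) : (inlList T).length = T.card := by
  rw [inlList, length_map, ← toFinset_card_of_nodup ((nodup_finRange X).filter _)]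
  congr 1
  ext
  simp

lemma count_inl_inlList (T : Finset (Fin X)) (x : Fin X) :
    (inlList T).count (Sum.inl x) = if x ∈ T then 1 else 0 := by
  rw [inlList, count_map_of_injective _ _ Sum.inl_injective, ((nodup_finRange X).filter _).count]
  simp

lemma setBlock_eq (S : ℕ → Finset (Fin X)) (q : ℕ) :
    setBlock X S q = inlList (S q)ᶜ ++ inlList (S q) := by
  simp [setBlock, inlList]

lemma length_setBlock (S : ℕ → Finset (Fin X)) (q : ℕ) : (setBlock X S q).length = X := by
  rw [setBlock_eq, length_append, length_inlList, length_inlList, Finset.card_compl,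
    Fintype.card_fin, Nat.sub_add_cancel (card_finset_fin_le _)]

lemma count_inl_setBlock (S : ℕ → Finset (Fin X)) (q : ℕ) (x : Fin X) :
    (setBlock X S q).count (Sum.inl x) = 1 := by
  rw [setBlock_eq, count_append, count_inl_inlList, count_inl_inlList]
  by_cases hx : x ∈ S q <;> simp [hx]

lemma filterMap_getRight_setBlock (S : ℕ → Finset (Fin X)) (q : ℕ) :
    (setBlock X S q).filterMap Sum.getRight? = [] := by
  simp [setBlock]

lemma length_dummyBlock (b : ℕ) : (dummyBlock X b).length = X := by
  simp [dummyBlock]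

lemma count_inl_dummyBlock (b : ℕ) (x : Fin X) : (dummyBlock X b).count (Sum.inl x) = 0 :=
  count_eq_zero.2 (by simp [dummyBlock])

lemma filterMap_getRight_dummyBlock (b : ℕ) :
    (dummyBlock X b).filterMap Sum.getRight? = range' (b * X) X := by
  rw [dummyBlock, filterMap_map, range'_eq_map_range, ← filterMap_eq_map]
  rfl

end Blocks

section Array

variable {X : ℕ} (n : ℕ) (S : ℕ → Finset (Fin X))

lemma filterMap_getRight_siArr :
    (siArr X n S).filterMap Sum.getRight? = range' 0 ((2 * n + 1) * X) := by
  have hfwd : ((range n).flatMap fun q => setBlock X S q ++ dummyBlock X q).filterMap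
      Sum.getRight? = range' 0 (n * X) := by
    simp only [filterMap_flatMap, filterMap_append, filterMap_getRight_setBlock,
      filterMap_getRight_dummyBlock, nil_append, range_eq_range', flatMap_range'_mul, zero_mul]
  have hrev : ((range n).flatMap fun q =>
      (setBlock X S (n - 1 - q)).reverse ++ dummyBlock X (n + 1 + q)).filterMap
        Sum.getRight? = range' ((n + 1) * X) (n * X) := by
    simp only [filterMap_flatMap, filterMap_append, filterMap_reverse,
      filterMap_getRight_setBlock, reverse_nil, filterMap_getRight_dummyBlock, nil_append]
    rw [← flatMap_range'_mul, range'_eq_map_range, flatMap_map]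
  rw [siArr, filterMap_append, filterMap_append, hfwd, hrev, filterMap_getRight_dummyBlock]
  rw [show (2 * n + 1) * X = n * X + X + n * X by ring, ← range'_append_1,
    ← range'_append_1 (m := n * X), zero_add, zero_add, add_one_mul]

lemma count_inr_siArr_le_one (d : ℕ) : (siArr X n S).count (Sum.inr d) ≤ 1 :=
  count_inr_le_one_of_nodup (by rw [filterMap_getRight_siArr]; exact nodup_range') d

-- The part of `siArr` strictly between `B_a` and `B_b^r` (block indices are 0-based).
def middlePart (a b : ℕ) : List (Fin X ⊕ ℕ) :=
  dummyBlock X a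
    ++ (range' (a + 1) (n - 1 - a)).flatMap (fun q => setBlock X S q ++ dummyBlock X q)
    ++ dummyBlock X n
    ++ (range (n - 1 - b)).flatMap
        (fun q => (setBlock X S (n - 1 - q)).reverse ++ dummyBlock X (n + 1 + q))

def queryRange (a b : ℕ) : List (Fin X ⊕ ℕ) :=
  inlList (S a) ++ middlePart n S a b ++ (inlList (S b)).reverse

lemma length_queryRange (a b : ℕ) :
    (queryRange n S a b).length
      = (S a).card + (S b).card + 2 * X * ((n - 1 - a) + (n - 1 - b) + 1) := by
  have hfwd := length_flatMap_of_length_eq (l := range' (a + 1) (n - 1 - a))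
    (f := fun q => setBlock X S q ++ dummyBlock X q) (c := 2 * X) fun q _ => by
      simp only [length_append, length_setBlock, length_dummyBlock]; ring
  have hrev := length_flatMap_of_length_eq (l := range (n - 1 - b))
    (f := fun q => (setBlock X S (n - 1 - q)).reverse ++ dummyBlock X (n + 1 + q)) (c := 2 * X)
    fun q _ => by simp only [length_append, length_reverse, length_setBlock, length_dummyBlock]; ring
  simp only [queryRange, middlePart, length_append, length_reverse, length_inlList,
    length_dummyBlock, hfwd, hrev, length_range', length_range]
  ring

lemma count_inl_queryRange (a b : ℕ) (x : Fin X) :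
    (queryRange n S a b).count (Sum.inl x)
      = (n - 1 - a) + (n - 1 - b) + (if x ∈ S a then 1 else 0) + (if x ∈ S b then 1 else 0) := by
  have hfwd := count_flatMap_of_count_eq (l := range' (a + 1) (n - 1 - a))
    (f := fun q => setBlock X S q ++ dummyBlock X q) (x := Sum.inl x) (c := 1) fun q _ => by
      simp only [count_append, count_inl_setBlock, count_inl_dummyBlock]
  have hrev := count_flatMap_of_count_eq (l := range (n - 1 - b))
    (f := fun q => (setBlock X S (n - 1 - q)).reverse ++ dummyBlock X (n + 1 + q))
    (x := Sum.inl x) (c := 1) fun q _ => by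
      simp only [count_append, count_reverse, count_inl_setBlock, count_inl_dummyBlock]
  simp only [queryRange, middlePart, count_append, count_reverse, count_inl_inlList,
    count_inl_dummyBlock, hfwd, hrev, length_range', length_range]
  ring

lemma siArr_eq_append_queryRange {a b : ℕ} (ha : a < n) (hb : b < n) :
    ∃ P T, siArr X n S = P ++ queryRange n S a b ++ T
      ∧ P.length = a * (2 * X) + (X - (S a).card) := by
  have hc : n - 1 - b < n := by omega
  refine ⟨(range a).flatMap (fun q => setBlock X S q ++ dummyBlock X q) ++ inlList (S a)ᶜ,
    (inlList (S b)ᶜ).reverse ++ dummyBlock X (n + 1 + (n - 1 - b))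
      ++ (range' (n - 1 - b + 1) (n - 1 - (n - 1 - b))).flatMap
        (fun q => (setBlock X S (n - 1 - q)).reverse ++ dummyBlock X (n + 1 + q)), ?_, ?_⟩
  · have hfwd := congrArg (flatMap fun q => setBlock X S q ++ dummyBlock X q)
      (range_eq_append_cons ha)
    have hrev := congrArg (flatMap fun q =>
      (setBlock X S (n - 1 - q)).reverse ++ dummyBlock X (n + 1 + q)) (range_eq_append_cons hc)
    simp only [flatMap_append, flatMap_cons] at hfwd hrev
    rw [siArr, hfwd, hrev, show n - 1 - (n - 1 - b) = b by omega, setBlock_eq, setBlock_eq,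
      reverse_append]
    simp only [queryRange, middlePart, append_assoc]
  · rw [length_append, length_flatMap_of_length_eq (c := 2 * X) fun q _ => by
      rw [length_append, length_setBlock, length_dummyBlock, two_mul], length_range,
      length_inlList, Finset.card_compl, Fintype.card_fin]

lemma take_drop_siArr_eq_queryRange {a b : ℕ} (ha : a < n) (hb : b < n) (hX : 0 < X) :
    ((siArr X n S).drop (a * (2 * X) + (X - (S a).card))).take
      ((2 * n * X + X + (n - (b + 1)) * (2 * X) + (S b).card - 1)
        - (a * (2 * X) + (X - (S a).card)) + 1) = queryRange n S a b := by
  obtain ⟨P, T, hPQT, hP⟩ := siArr_eq_append_queryRange n S ha hb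
  rw [hPQT, append_assoc, drop_left' hP, take_left']
  have hn : 2 * n * X = a * (2 * X) + 2 * X * (n - 1 - a + 1) := by
    nth_rewrite 1 [show n = a + (n - 1 - a + 1) by omega]
    ring
  have hSa := card_finset_fin_le (S a)
  rw [length_queryRange, hn, show n - (b + 1) = n - 1 - b by omega]
  ring_nf
  omega

end Array

/-- The window `drop … take …` is the query range (with 1-based `i`, `j`): it starts at the
first symbol of `B_i` encoding an element of `S_i` and ends at the last symbol of `B_j^r`
encoding an element of `S_j`. -/
theorem stmt_16_general (X n : ℕ) (S : ℕ → Finset (Fin X)) (i j : ℕ)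
    (hi1 : 1 ≤ i) (hin : i ≤ n) (hj1 : 1 ≤ j) (hjn : j ≤ n)
    (hSi : (S (i - 1)).Nonempty) :
    (∃ y : Fin X ⊕ ℕ,
        (((siArr X n S).drop ((i - 1) * (2 * X) + (X - (S (i - 1)).card))).take
            ((2 * n * X + X + (n - j) * (2 * X) + (S (j - 1)).card - 1)
              - ((i - 1) * (2 * X) + (X - (S (i - 1)).card)) + 1)).length
          ≤ 2 * X *
            ((((siArr X n S).drop ((i - 1) * (2 * X) + (X - (S (i - 1)).card))).take
                ((2 * n * X + X + (n - j) * (2 * X) + (S (j - 1)).card - 1)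
                  - ((i - 1) * (2 * X) + (X - (S (i - 1)).card)) + 1)).count y))
      ↔ (S (i - 1) ∩ S (j - 1)).Nonempty := by
  obtain ⟨a, rfl⟩ : ∃ a, i = a + 1 := ⟨i - 1, by omega⟩
  obtain ⟨b, rfl⟩ : ∃ b, j = b + 1 := ⟨j - 1, by omega⟩
  simp only [Nat.add_sub_cancel] at hSi ⊢
  have hwindow := take_drop_siArr_eq_queryRange n S (a := a) (b := b) (by omega) (by omega)
    (hSi.elim fun x _ => x.pos)
  have hsub : queryRange n S a b <+ siArr X n S := by
    rw [← hwindow]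
    exact (take_sublist _ _).trans (drop_sublist _ _)
  rw [hwindow]
  exact exists_majority_iff_inter_nonempty _ _ _ (length_queryRange n S a b)
    (count_inl_queryRange n S a b)
    (fun d => (hsub.count_le _).trans (count_inr_siArr_le_one n S d))
    (Nat.add_pos_left hSi.card_pos _)

/-- The constructed query range (for `1 ≤ i, j ≤ n`, 1-indexed) starts at the
first character of `B_i` encoding an element of `S_i` and ends at the last
character of `B_j^r` encoding an element of `S_j`.  It contains a
`1/(2X)`-majority element iff `S_i ∩ S_j ≠ ∅`. -/
theorem stmt_16 (X n : ℕ) (S : ℕ → Finset (Fin X)) (i j : ℕ)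
    (hi1 : 1 ≤ i) (hin : i ≤ n) (hj1 : 1 ≤ j) (hjn : j ≤ n)
    (hSi : (S (i - 1)).Nonempty) (hSj : (S (j - 1)).Nonempty) :
    (∃ y : Fin X ⊕ ℕ,
        (((siArr X n S).drop ((i - 1) * (2 * X) + (X - (S (i - 1)).card))).take
            ((2 * n * X + X + (n - j) * (2 * X) + (S (j - 1)).card - 1)
              - ((i - 1) * (2 * X) + (X - (S (i - 1)).card)) + 1)).length
          ≤ 2 * X *
            ((((siArr X n S).drop ((i - 1) * (2 * X) + (X - (S (i - 1)).card))).take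
                ((2 * n * X + X + (n - j) * (2 * X) + (S (j - 1)).card - 1)
                  - ((i - 1) * (2 * X) + (X - (S (i - 1)).card)) + 1)).count y))
      ↔ (S (i - 1) ∩ S (j - 1)).Nonempty :=
  stmt_16_general X n S i j hi1 hin hj1 hjn hSi
end
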